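/- Let m be a positive integer and n a divisor of m. Then for every r ∈ Z/2mZ, the index m theta function satisfies θ_{m,r}|W_m(n) = Σ_{r' mod 2m} Ω_m(n)_{r,r'} θ_{m,r'}; equivalently, θ_m|W_m(n) = Ω_m(n)·θ_m. Consequently, for any vector (h_r)_{r mod 2m} of functions on the upper half-plane, (Σ_r h_r θ_{m,r})|W_m(n) = Σ_{r,r' mod 2m} h_r Ω_m(n)_{r,r'} θ_{m,r'}. -/

import Mathlib

noncomputable section

open Topology MeasureTheory

/-- `e2 x = e^{2πix}`. -/
def e2 (x : ℂ) : ℂ := Complex.exp (2 * (Real.pi : ℂ) * Complex.I * x)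

/-- The upper half-plane, viewed as a subset of `ℂ`. -/
def UHP : Set ℂ := {τ : ℂ | 0 < τ.im}
/-- The index `m` theta function `θ_{m,r}(τ,z) = Σ_{k ≡ r mod 2m} q^{k²/4m} y^k`.
It depends only on `r` modulo `2m`. -/
def jacTheta (m : ℕ) (r : ℤ) (τ z : ℂ) : ℂ :=
  ∑' k : ℤ, if (2 * (m : ℤ)) ∣ (k - r) then
    e2 ((k : ℂ) ^ 2 / (4 * (m : ℂ)) * τ + (k : ℂ) * z) else 0

/-- The weight `3/2` unary theta function `S_{m,r}(τ) = Σ_{k ≡ r mod 2m} k q^{k²/4m}`. -/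
def unaryTheta (m : ℕ) (r : ℤ) (τ : ℂ) : ℂ :=
  ∑' k : ℤ, if (2 * (m : ℤ)) ∣ (k - r) then (k : ℂ) * e2 ((k : ℂ) ^ 2 / (4 * (m : ℂ)) * τ) else 0

/-- The index `m` elliptic transformation `φ ↦ φ|_m(λ,μ)`. -/
def ellAct (m lm mu : ℤ) (φ : ℂ → ℂ → ℂ) : ℂ → ℂ → ℂ := fun τ z =>
  e2 ((m : ℂ) * ((lm : ℂ) ^ 2 * τ + 2 * (lm : ℂ) * z)) * φ τ (z + (lm : ℂ) * τ + (mu : ℂ))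

/-- The weight `k`, index `m` modular transformation `φ ↦ φ|_{k,m}γ` for `γ ∈ SL₂(ℤ)`. -/
def slAct (k m : ℤ) (γ : Matrix.SpecialLinearGroup (Fin 2) ℤ) (φ : ℂ → ℂ → ℂ) :
    ℂ → ℂ → ℂ := fun τ z =>
  ((γ 1 0 : ℂ) * τ + (γ 1 1 : ℂ)) ^ (-k) *
    e2 (-(m : ℂ) * (γ 1 0 : ℂ) * z ^ 2 / ((γ 1 0 : ℂ) * τ + (γ 1 1 : ℂ))) *
    φ (((γ 0 0 : ℂ) * τ + (γ 0 1 : ℂ)) / ((γ 1 0 : ℂ) * τ + (γ 1 1 : ℂ)))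
      (z / ((γ 1 0 : ℂ) * τ + (γ 1 1 : ℂ)))

/-- An unrestricted Jacobi form of weight `k` and index `m`: a holomorphic function on
`ℍ × ℂ` invariant under the elliptic and modular transformations. -/
def IsUnrestrictedJacobiForm (k m : ℤ) (φ : ℂ → ℂ → ℂ) : Prop :=
  DifferentiableOn ℂ (fun p : ℂ × ℂ => φ p.1 p.2) {p : ℂ × ℂ | p.1 ∈ UHP} ∧
  (∀ lm mu : ℤ, ∀ τ ∈ UHP, ∀ z : ℂ, ellAct m lm mu φ τ z = φ τ z) ∧
  (∀ γ : Matrix.SpecialLinearGroup (Fin 2) ℤ, ∀ τ ∈ UHP, ∀ z : ℂ, slAct k m γ φ τ z = φ τ z)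

/-- A weak Jacobi form: an unrestricted Jacobi form whose Fourier coefficients `c(n,r)`
vanish for `n < 0`. -/
def IsWeakJacobiForm (k m : ℤ) (φ : ℂ → ℂ → ℂ) : Prop :=
  IsUnrestrictedJacobiForm k m φ ∧
  ∃ c : ℤ → ℤ → ℂ, (∀ n r : ℤ, n < 0 → c n r = 0) ∧
    ∀ τ ∈ UHP, ∀ z : ℂ, φ τ z = ∑' p : ℤ × ℤ, c p.1 p.2 * e2 ((p.1 : ℂ) * τ + (p.2 : ℂ) * z)

/-- A strong Jacobi form: an unrestricted Jacobi form whose Fourier coefficients `c(n,r)`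
vanish whenever `r² - 4mn > 0`. -/
def IsStrongJacobiForm (k m : ℤ) (φ : ℂ → ℂ → ℂ) : Prop :=
  IsUnrestrictedJacobiForm k m φ ∧
  ∃ c : ℤ → ℤ → ℂ, (∀ n r : ℤ, r ^ 2 - 4 * m * n > 0 → c n r = 0) ∧
    ∀ τ ∈ UHP, ∀ z : ℂ, φ τ z = ∑' p : ℤ × ℤ, c p.1 p.2 * e2 ((p.1 : ℂ) * τ + (p.2 : ℂ) * z)

/-- The Eichler–Zagier operator `W_m(n)` on functions on `ℍ × ℂ`. -/
def ezOp (m n : ℕ) (f : ℂ → ℂ → ℂ) : ℂ → ℂ → ℂ := fun τ z =>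
  (n : ℂ)⁻¹ * ∑ a ∈ Finset.range n, ∑ b ∈ Finset.range n,
    e2 ((m : ℂ) * ((a : ℂ) ^ 2 / (n : ℂ) ^ 2 * τ + 2 * ((a : ℂ) / (n : ℂ)) * z +
      (a : ℂ) * (b : ℂ) / (n : ℂ) ^ 2)) * f τ (z + ((a : ℂ) / (n : ℂ)) * τ + (b : ℂ) / (n : ℂ))

/-- The `(r,r')` entry of the matrix `Ω_m(n)` (for `n ∣ m`), indexed by residues mod `2m`:
it is `1` if `r + r' ≡ 0 mod 2n` and `r - r' ≡ 0 mod 2m/n`, and `0` otherwise. -/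
def OmegaEnt (m n : ℕ) (r r' : ℤ) : ℂ :=
  if (2 * (n : ℤ)) ∣ (r + r') ∧ (2 * ((m / n : ℕ) : ℤ)) ∣ (r - r') then 1 else 0

/-! Both sides are theta series `Σ_k c(k) q^{k²/4m} y^k`. With `M = m/n`, the shift
`z ↦ z + aτ/n + b/n` in `W_m(n)` moves the summation index of `θ_{m,r}` by `2Ma` and twists it by
`e(b(k - Ma)/n)`. Averaging over `b` keeps the `k` with `k ≡ Ma mod n`, and then exactly one `a`
survives precisely when `k ≡ -r mod 2n` and `k ≡ r mod 2M`: these are the coefficients of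
`Σ_{r'} Ω_m(n)_{r,r'} θ_{m,r'}`. The second statement follows by linearity of `W_m(n)`. -/

lemma e2_add (x y : ℂ) : e2 (x + y) = e2 x * e2 y := by
  rw [e2, e2, e2, ← Complex.exp_add]; ring_nf

lemma norm_e2_ofReal (x : ℝ) : ‖e2 x‖ = 1 := by
  rw [e2, show 2 * (Real.pi : ℂ) * Complex.I * x = ((2 * Real.pi * x : ℝ) : ℂ) * Complex.I by
    push_cast; ring]
  exact Complex.norm_exp_ofReal_mul_I _

lemma sum_range_e2_mul_div {n : ℕ} (hn : 0 < n) (x : ℤ) :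
    ∑ b ∈ Finset.range n, e2 ((b : ℂ) * x / n) = if (n : ℤ) ∣ x then (n : ℂ) else 0 := by
  have hζ := Complex.isPrimitiveRoot_exp n hn.ne'
  set ζ := Complex.exp (2 * Real.pi * Complex.I / n)
  have hpow : ∀ b : ℕ, e2 ((b : ℂ) * x / n) = (ζ ^ x) ^ b := by
    intro b
    rw [e2, ← Complex.exp_int_mul, ← Complex.exp_nat_mul]
    ring_nf
  simp_rw [hpow]
  split_ifs with hx
  · simp [(hζ.zpow_eq_one_iff_dvd x).2 hx]
  · have hpow_n : (ζ ^ x) ^ n = 1 := by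
      rw [← zpow_natCast, ← zpow_mul, mul_comm, zpow_mul, zpow_natCast, hζ.pow_eq_one, one_zpow]
    rw [geom_sum_eq (mt (hζ.zpow_eq_one_iff_dvd x).1 hx), hpow_n, sub_self, zero_div]

def thetaSeries (m : ℕ) (c : ℤ → ℂ) (τ z : ℂ) : ℂ :=
  ∑' k : ℤ, c k * e2 ((k : ℂ) ^ 2 / (4 * (m : ℂ)) * τ + (k : ℂ) * z)

lemma summable_thetaSeries {m : ℕ} (hm : 0 < m) {τ : ℂ} (hτ : τ ∈ UHP) (z : ℂ) {c : ℤ → ℂ}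
    {C : ℝ} (hc : ∀ k, ‖c k‖ ≤ C) :
    Summable fun k : ℤ => c k * e2 ((k : ℂ) ^ 2 / (4 * (m : ℂ)) * τ + (k : ℂ) * z) := by
  have hm' : (m : ℂ) ≠ 0 := Nat.cast_ne_zero.2 hm.ne'
  have him : 0 < (τ / (2 * (m : ℂ))).im := by
    rw [show τ / (2 * (m : ℂ)) = ((2 * (m : ℝ))⁻¹ : ℝ) * τ by push_cast; ring,
      Complex.im_ofReal_mul]
    exact mul_pos (by positivity) hτ
  have hterm : ∀ k : ℤ, e2 ((k : ℂ) ^ 2 / (4 * (m : ℂ)) * τ + (k : ℂ) * z)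
      = jacobiTheta₂_term k z (τ / (2 * (m : ℂ))) := by
    intro k
    rw [e2, jacobiTheta₂_term]
    congr 1
    field_simp
    ring
  simp_rw [hterm]
  refine Summable.of_norm_bounded
    (((summable_jacobiTheta₂_term_iff z _).2 him).norm.mul_left C) fun k => ?_
  rw [norm_mul]
  exact mul_le_mul_of_nonneg_right (hc k) (norm_nonneg _)

lemma mul_thetaSeries (m : ℕ) (a : ℂ) (c : ℤ → ℂ) (τ z : ℂ) :
    a * thetaSeries m c τ z = thetaSeries m (fun k => a * c k) τ z := by
  simp only [thetaSeries, ← tsum_mul_left, mul_assoc]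

lemma sum_thetaSeries {ι : Type*} {m : ℕ} (hm : 0 < m) {τ : ℂ} (hτ : τ ∈ UHP) (z : ℂ)
    (s : Finset ι) (c : ι → ℤ → ℂ) {C : ℝ} (hc : ∀ i ∈ s, ∀ k, ‖c i k‖ ≤ C) :
    ∑ i ∈ s, thetaSeries m (c i) τ z = thetaSeries m (fun k => ∑ i ∈ s, c i k) τ z := by
  simp only [thetaSeries, Finset.sum_mul]
  exact (Summable.tsum_finsetSum fun i hi => summable_thetaSeries hm hτ z (hc i hi)).symm

lemma jacTheta_eq_thetaSeries (m : ℕ) (r : ℤ) :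
    jacTheta m r = thetaSeries m (fun k => if 2 * (m : ℤ) ∣ k - r then 1 else 0) := by
  ext τ z
  simp only [jacTheta, thetaSeries, ite_mul, one_mul, zero_mul]

lemma e2_mul_jacTheta_shift {m : ℕ} (hm : 0 < m) (r ℓ : ℤ) {x : ℂ} (hx : 2 * (m : ℂ) * x = ℓ)
    (y τ z : ℂ) :
    e2 ((m : ℂ) * (x ^ 2 * τ + 2 * x * z + x * y)) * jacTheta m r τ (z + x * τ + y) =
      thetaSeries m (fun k => (if 2 * (m : ℤ) ∣ k - ℓ - r then 1 else 0) *
        e2 (((k : ℂ) - ℓ / 2) * y)) τ z := by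
  have hm' : (m : ℂ) ≠ 0 := Nat.cast_ne_zero.2 hm.ne'
  rw [jacTheta_eq_thetaSeries, thetaSeries, thetaSeries, ← tsum_mul_left,
    ← (Equiv.subRight ℓ).tsum_eq]
  refine tsum_congr fun k => ?_
  simp only [Equiv.subRight_apply]
  split_ifs
  · simp only [one_mul, ← e2_add]
    congr 1
    have hx' : x = ℓ / (2 * m) := by rw [← hx]; field_simp
    subst hx'
    push_cast
    field_simp
    ring
  · simp

lemma sum_range_ite_dvd_sub {M : Type*} [AddCommMonoid M] {N : ℕ} (hN : 0 < N) (t : ℤ)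
    (f : ℤ → M) :
    ∑ a ∈ Finset.range N, (if (N : ℤ) ∣ t - a then f a else 0) = f (t % N) := by
  have hN' : (N : ℤ) ≠ 0 := by exact_mod_cast hN.ne'
  have hrem : ((t % N).toNat : ℤ) = t % N := Int.toNat_of_nonneg (Int.emod_nonneg t hN')
  rw [Finset.sum_eq_single_of_mem (t % N).toNat, hrem, if_pos]
  · exact Int.modEq_iff_dvd.1 (Int.mod_modEq t N)
  · have := Int.emod_lt_of_pos t (Int.natCast_pos.2 hN)
    rw [Finset.mem_range]
    omega
  · intro a ha hne
    rw [if_neg]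
    intro hdvd
    apply hne
    have ha' : (a : ℤ) < N := by exact_mod_cast Finset.mem_range.1 ha
    have : (a : ℤ) = t % N := by
      rw [← Int.emod_eq_of_lt (by positivity) ha']
      exact Int.modEq_iff_dvd.2 hdvd
    omega

lemma OmegaEnt_congr_right {m n : ℕ} (hn : n ∣ m) (r : ℤ) {k k' : ℤ}
    (h : 2 * (m : ℤ) ∣ k - k') : OmegaEnt m n r k = OmegaEnt m n r k' := by
  have hn' : 2 * (n : ℤ) ∣ k - k' :=
    (mul_dvd_mul_left 2 (Int.natCast_dvd_natCast.2 hn)).trans h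
  have hM' : 2 * ((m / n : ℕ) : ℤ) ∣ k - k' :=
    (mul_dvd_mul_left 2 (Int.natCast_dvd_natCast.2 (Nat.div_dvd_of_dvd hn))).trans h
  simp only [OmegaEnt, show r + k = r + k' + (k - k') by ring,
    show r - k = r - k' - (k - k') by ring, dvd_add_left hn', dvd_sub_left hM']

lemma sum_OmegaEnt_mul_ite_dvd {m n : ℕ} (hm : 0 < m) (hn : n ∣ m) (r k : ℤ) :
    ∑ r' ∈ Finset.range (2 * m),
        OmegaEnt m n r r' * (if 2 * (m : ℤ) ∣ k - r' then 1 else 0) = OmegaEnt m n r k := by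
  simp only [mul_ite, mul_one, mul_zero]
  have := sum_range_ite_dvd_sub (N := 2 * m) (by omega) k (OmegaEnt m n r)
  push_cast at this
  rw [this]
  exact OmegaEnt_congr_right hn r (Int.modEq_iff_dvd.1 (Int.mod_modEq k _).symm)

lemma sum_range_ite_mul_ite_eq_OmegaEnt {m n M : ℕ} (hn : 0 < n) (hM : 0 < M)
    (hmM : m = n * M) (r k : ℤ) :
    ∑ a ∈ Finset.range n, (if 2 * (m : ℤ) ∣ k - 2 * M * a - r then 1 else 0) *
        (if (n : ℤ) ∣ k - M * a then 1 else 0) = OmegaEnt m n r k := by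
  have hmn : m / n = M := by rw [hmM, Nat.mul_div_cancel_left M hn]
  rw [OmegaEnt, hmn]
  by_cases hkr : 2 * (M : ℤ) ∣ k - r
  · obtain ⟨t, ht⟩ := hkr
    have hP : ∀ a : ℕ, 2 * (m : ℤ) ∣ k - 2 * M * a - r ↔ (n : ℤ) ∣ t - a := by
      intro a
      rw [show k - 2 * M * a - r = 2 * M * (t - a) by linear_combination ht, hmM, Nat.cast_mul,
        show 2 * ((n : ℤ) * M) = 2 * M * n by ring, mul_dvd_mul_iff_left (by positivity)]
    simp only [hP, ite_mul, one_mul, zero_mul]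
    rw [sum_range_ite_dvd_sub hn t (fun a => if (n : ℤ) ∣ k - M * a then (1 : ℂ) else 0)]
    refine if_congr ?_ rfl rfl
    have h2M : 2 * (M : ℤ) ∣ r - k := ⟨-t, by linear_combination -ht⟩
    rw [show k - M * (t % n) = k - M * t + n * (M * (t / n)) by rw [Int.emod_def]; ring,
      dvd_add_left (dvd_mul_right _ _), and_iff_left h2M, ← mul_dvd_mul_iff_left two_ne_zero,
      show 2 * (k - M * t) = r + k by linear_combination ht]
  · rw [if_neg (fun h => hkr (by rw [← dvd_sub_comm]; exact h.2))]
    refine Finset.sum_eq_zero fun a _ => ?_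
    rw [if_neg, zero_mul]
    intro h
    have hMm : 2 * (M : ℤ) ∣ 2 * m := ⟨n, by rw [hmM]; push_cast; ring⟩
    refine hkr ?_
    rw [show k - r = k - 2 * M * a - r + 2 * M * a by ring]
    exact dvd_add (hMm.trans h) (dvd_mul_right _ _)

lemma ezOp_coeff_eq_OmegaEnt {m n M : ℕ} (hn : 0 < n) (hM : 0 < M) (hmM : m = n * M)
    (r k : ℤ) :
    (n : ℂ)⁻¹ * ∑ a ∈ Finset.range n, ∑ b ∈ Finset.range n,
        (if 2 * (m : ℤ) ∣ k - 2 * M * a - r then 1 else 0) *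
          e2 (((k : ℂ) - ((2 * M * a : ℤ) : ℂ) / 2) * ((b : ℂ) / n)) = OmegaEnt m n r k := by
  have hn' : (n : ℂ) ≠ 0 := Nat.cast_ne_zero.2 hn.ne'
  rw [← sum_range_ite_mul_ite_eq_OmegaEnt hn hM hmM, Finset.mul_sum]
  refine Finset.sum_congr rfl fun a _ => ?_
  have hchar : ∑ b ∈ Finset.range n, e2 (((k : ℂ) - ((2 * M * a : ℤ) : ℂ) / 2) * ((b : ℂ) / n))
      = if (n : ℤ) ∣ k - M * a then (n : ℂ) else 0 := by
    rw [← sum_range_e2_mul_div hn]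
    refine Finset.sum_congr rfl fun b _ => congrArg e2 ?_
    push_cast
    ring
  rw [← Finset.mul_sum, hchar]
  split_ifs <;> simp [hn']

lemma ezOp_jacTheta {m n : ℕ} (hm : 0 < m) (hn : n ∣ m) (r : ℤ) {τ : ℂ} (hτ : τ ∈ UHP)
    (z : ℂ) : ezOp m n (jacTheta m r) τ z = thetaSeries m (OmegaEnt m n r) τ z := by
  have hn0 : 0 < n := Nat.pos_of_dvd_of_pos hn hm
  obtain ⟨M, hmM⟩ := hn
  have hM0 : 0 < M := Nat.pos_of_mul_pos_left (hmM ▸ hm)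
  have hnC : (n : ℂ) ≠ 0 := Nat.cast_ne_zero.2 hn0.ne'
  have hshift : ∀ a b : ℕ,
      e2 ((m : ℂ) * ((a : ℂ) ^ 2 / (n : ℂ) ^ 2 * τ + 2 * ((a : ℂ) / (n : ℂ)) * z +
        (a : ℂ) * (b : ℂ) / (n : ℂ) ^ 2)) *
        jacTheta m r τ (z + ((a : ℂ) / (n : ℂ)) * τ + (b : ℂ) / (n : ℂ)) =
      thetaSeries m (fun k => (if 2 * (m : ℤ) ∣ k - 2 * M * a - r then 1 else 0) *
        e2 (((k : ℂ) - ((2 * M * a : ℤ) : ℂ) / 2) * ((b : ℂ) / n))) τ z := by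
    intro a b
    rw [← e2_mul_jacTheta_shift hm r (2 * M * a) (x := a / n)
      (by rw [hmM]; push_cast; field_simp)]
    congr 3
    ring
  have hbound : ∀ p ∈ Finset.range n ×ˢ Finset.range n, ∀ k : ℤ,
      ‖(if 2 * (m : ℤ) ∣ k - 2 * M * p.1 - r then (1 : ℂ) else 0) *
        e2 (((k : ℂ) - ((2 * M * p.1 : ℤ) : ℂ) / 2) * ((p.2 : ℂ) / n))‖ ≤ 1 := by
    intro p _ k
    rw [norm_mul, show ((k : ℂ) - ((2 * M * p.1 : ℤ) : ℂ) / 2) * ((p.2 : ℂ) / n)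
      = (((k - M * p.1) * (p.2 / n) : ℝ) : ℂ) by push_cast; ring, norm_e2_ofReal, mul_one]
    split_ifs <;> simp
  rw [ezOp]
  simp only [hshift]
  rw [← Finset.sum_product', sum_thetaSeries hm hτ z _ _ hbound, mul_thetaSeries]
  congr 1
  funext k
  rw [Finset.sum_product, ezOp_coeff_eq_OmegaEnt hn0 hM0 hmM]

lemma sum_OmegaEnt_mul_jacTheta {m n : ℕ} (hm : 0 < m) (hn : n ∣ m) (r : ℤ) {τ : ℂ}
    (hτ : τ ∈ UHP) (z : ℂ) :
    ∑ r' ∈ Finset.range (2 * m), OmegaEnt m n r r' * jacTheta m r' τ z =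
      thetaSeries m (OmegaEnt m n r) τ z := by
  simp only [jacTheta_eq_thetaSeries, mul_thetaSeries]
  rw [sum_thetaSeries hm hτ z _ _ (C := 1) fun r' _ k => by
    rw [OmegaEnt]; split_ifs <;> simp]
  simp only [sum_OmegaEnt_mul_ite_dvd hm hn r]

lemma ezOp_sum_mul (m n : ℕ) {ι : Type*} (s : Finset ι) (h : ι → ℂ → ℂ)
    (f : ι → ℂ → ℂ → ℂ) (τ z : ℂ) :
    ezOp m n (fun τ' z' => ∑ i ∈ s, h i τ' * f i τ' z') τ z =
      ∑ i ∈ s, h i τ * ezOp m n (f i) τ z := by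
  simp only [ezOp, Finset.mul_sum]
  rw [Finset.sum_comm (s := s)]
  refine Finset.sum_congr rfl fun a _ => ?_
  rw [Finset.sum_comm (s := s)]
  refine Finset.sum_congr rfl fun b _ => Finset.sum_congr rfl fun i _ => ?_
  ring

/-- for `n ∣ m` and every `r`, `θ_{m,r}|W_m(n) = Σ_{r'} Ω_m(n)_{r,r'} θ_{m,r'}`;
consequently, for any vector `(h_r)` of functions on the upper half-plane,
`(Σ_r h_r θ_{m,r})|W_m(n) = Σ_{r,r'} h_r Ω_m(n)_{r,r'} θ_{m,r'}`. -/
theorem statement16 (m n : ℕ) (hm : 0 < m) (hn : n ∣ m) :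
    (∀ r : ℤ, ∀ τ ∈ UHP, ∀ z : ℂ,
      ezOp m n (jacTheta m r) τ z =
        ∑ r' ∈ Finset.range (2 * m), OmegaEnt m n r (r' : ℤ) * jacTheta m (r' : ℤ) τ z) ∧
    (∀ h : ℕ → ℂ → ℂ, ∀ τ ∈ UHP, ∀ z : ℂ,
      ezOp m n (fun τ' z' =>
        ∑ r ∈ Finset.range (2 * m), h r τ' * jacTheta m (r : ℤ) τ' z') τ z =
      ∑ r ∈ Finset.range (2 * m), ∑ r' ∈ Finset.range (2 * m),
        h r τ * OmegaEnt m n (r : ℤ) (r' : ℤ) * jacTheta m (r' : ℤ) τ z) := by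
  have hθ : ∀ r : ℤ, ∀ τ ∈ UHP, ∀ z : ℂ,
      ezOp m n (jacTheta m r) τ z =
        ∑ r' ∈ Finset.range (2 * m), OmegaEnt m n r (r' : ℤ) * jacTheta m (r' : ℤ) τ z :=
    fun r τ hτ z =>
      (ezOp_jacTheta hm hn r hτ z).trans (sum_OmegaEnt_mul_jacTheta hm hn r hτ z).symm
  refine ⟨hθ, fun h τ hτ z => ?_⟩
  rw [ezOp_sum_mul]
  refine Finset.sum_congr rfl fun r _ => ?_
  rw [hθ r τ hτ z, Finset.mul_sum]
  simp only [mul_assoc]
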